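/- arXiv:1111.2313 — 5 statements merged into one kernel-verified Lean document; each statement's English description precedes it below -/
import Mathlib

section
/- Characterization of the M-relation via orbits: X_i ⤳ X_j holds if and only if for every set of states S', Ψ_{X_i ∪ X_j}(S') ⊆ Ψ_{X_i}(Ω_{X_i ∪ X_j}(S')). -/
variable {S : Type*} {A : Type*}

/-- Orbit operator: states reachable from `T` by the reflexive-transitive closure of `r`. -/
def orbit (r : S → S → Prop) (T : Set S) : Set S :=
  {s' | ∃ s ∈ T, Relation.ReflTransGen r s s'}

/-- Equilibria operator: states in the orbit of `T` that can be reached back from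
any state they reach. -/
def equil (r : S → S → Prop) (T : Set S) : Set S :=
  {s | s ∈ orbit r T ∧ ∀ s', Relation.ReflTransGen r s s' → Relation.ReflTransGen r s' s}

/-- The relation `→_X` induced by a set `X` of agents. -/
def relOf (rel : A → S → S → Prop) (X : Set A) : S → S → Prop :=
  fun s t => ∃ a ∈ X, rel a s t

/-- The M-relation `X_i ⤳ X_j`: for all `T`, the `→_{X_j}`-image of
`Ψ_{X_i}(Ψ_{X_i ∪ X_j}(T))` is contained in `Ψ_{X_i}(Ψ_{X_i ∪ X_j}(T))`. -/
def mrelI (rel : A → S → S → Prop) (Xi Xj : Set A) : Prop :=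
  ∀ T : Set S, ∀ s ∈ equil (relOf rel Xi) (equil (relOf rel (Xi ∪ Xj)) T),
    ∀ s', relOf rel Xj s s' →
      s' ∈ equil (relOf rel Xi) (equil (relOf rel (Xi ∪ Xj)) T)

open Relation

/-- In a finite state space, from any state one can reach an "equilibrium" state. -/
lemma exists_equil_aux [Finite S] (r : S → S → Prop) (s : S) :
    ∃ w, ReflTransGen r s w ∧ ∀ v, ReflTransGen r w v → ReflTransGen r v w := by
  classical
  cases nonempty_fintype S
  let f : S → Finset S := fun u => Finset.univ.filter (fun v => ReflTransGen r u v)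
  have hmem : ∀ u, u ∈ f u := fun u =>
    Finset.mem_filter.2 ⟨Finset.mem_univ u, .refl⟩
  suffices h : ∀ n (s : S), (f s).card ≤ n →
      ∃ w, ReflTransGen r s w ∧ ∀ v, ReflTransGen r w v → ReflTransGen r v w from
    h (f s).card s le_rfl
  intro n
  induction n with
  | zero =>
    intro s hs
    exact absurd (Finset.card_pos.2 ⟨s, hmem s⟩) (by omega)
  | succ n ih =>
    intro s hs
    by_cases h' : ∀ v, ReflTransGen r s v → ReflTransGen r v s
    · exact ⟨s, .refl, h'⟩
    · push_neg at h'
      obtain ⟨t, hst, hts⟩ := h'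
      have hsub : f t ⊆ f s := by
        intro v hv
        simp only [f, Finset.mem_filter, Finset.mem_univ, true_and] at hv ⊢
        exact hst.trans hv
      have hlt : (f t).card < (f s).card := by
        apply Finset.card_lt_card
        refine ⟨hsub, fun hss => hts ?_⟩
        have := hss (hmem s)
        simpa [f] using this
      obtain ⟨w, hw1, hw2⟩ := ih t (by omega)
      exact ⟨w, hst.trans hw1, hw2⟩

lemma relOf_union_iff (rel : A → S → S → Prop) (Xi Xj : Set A) (s t : S) :
    relOf rel (Xi ∪ Xj) s t ↔ relOf rel Xi s t ∨ relOf rel Xj s t := by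
  constructor
  · rintro ⟨a, ha | ha, h⟩
    exacts [Or.inl ⟨a, ha, h⟩, Or.inr ⟨a, ha, h⟩]
  · rintro (⟨a, ha, h⟩ | ⟨a, ha, h⟩)
    exacts [⟨a, Or.inl ha, h⟩, ⟨a, Or.inr ha, h⟩]

theorem mrel_iff_orbit (rel : A → S → S → Prop) [Finite S] (Xi Xj : Set A) :
    mrelI rel Xi Xj ↔
      ∀ T : Set S, equil (relOf rel (Xi ∪ Xj)) T ⊆
        equil (relOf rel Xi) (orbit (relOf rel (Xi ∪ Xj)) T) := by
  set ri := relOf rel Xi with hri_def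
  set rj := relOf rel Xj with hrj_def
  set r := relOf rel (Xi ∪ Xj) with hr_def
  have hri : ∀ s t, ri s t → r s t := fun s t ⟨a, ha, h⟩ => ⟨a, Or.inl ha, h⟩
  have hrj : ∀ s t, rj s t → r s t := fun s t ⟨a, ha, h⟩ => ⟨a, Or.inr ha, h⟩
  have hriT : ∀ {s t}, ReflTransGen ri s t → ReflTransGen r s t :=
    fun h => ReflTransGen.mono hri _ _ h
  constructor
  · -- mrelI → inclusion
    intro h T s hs
    obtain ⟨hsΩ, hsT⟩ := hs
    refine ⟨⟨s, hsΩ, .refl⟩, ?_⟩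
    -- show s is an ri-equilibrium, using the set E = Ψ_i(Ψ_r({s}))
    set E : Set S := equil ri (equil r {s}) with hE
    -- every r-reachable state from s is in equil r {s}
    have hclass : ∀ u, ReflTransGen r s u → u ∈ equil r {s} := by
      intro u hu
      exact ⟨⟨s, rfl, hu⟩, fun v hv => (hsT v (hu.trans hv)).trans hu⟩
    -- E is closed under ri steps
    have hEi : ∀ u ∈ E, ∀ v, ri u v → v ∈ E := by
      rintro u ⟨⟨u₀, hu₀, hu₀u⟩, huT⟩ v huv
      have hvu : ReflTransGen ri v u := huT v (.single huv)
      refine ⟨⟨u₀, hu₀, hu₀u.trans (.single huv)⟩, fun w hw => ?_⟩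
      exact (huT w ((ReflTransGen.single huv).trans hw)).trans (.single huv)
    -- E is closed under rj steps, by mrelI
    have hEj : ∀ u ∈ E, ∀ v, rj u v → v ∈ E := fun u hu v huv => h {s} u hu v huv
    -- hence closed under r-reachability
    have hEr : ∀ u ∈ E, ∀ v, ReflTransGen r u v → v ∈ E := by
      intro u hu v huv
      induction huv with
      | refl => exact hu
      | tail _ hstep ih =>
        rcases (relOf_union_iff rel Xi Xj _ _).1 hstep with h1 | h1
        · exact hEi _ ih _ h1
        · exact hEj _ ih _ h1
    -- find an ri-equilibrium w reachable from s
    obtain ⟨w, hw1, hw2⟩ := exists_equil_aux ri s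
    have hwE : w ∈ E := ⟨⟨w, hclass w (hriT hw1), .refl⟩, hw2⟩
    -- w reaches s back under r, so s ∈ E
    have hsE : s ∈ E := hEr w hwE s (hsT w (hriT hw1))
    exact hsE.2
  · -- inclusion → mrelI
    intro h T s hs s' hss'
    obtain ⟨⟨u, hu, hus⟩, hsT⟩ := hs
    -- s ∈ equil r T
    have hsEq : s ∈ equil r T := by
      obtain ⟨⟨u₀, hu₀, hu₀u⟩, huT⟩ := hu
      refine ⟨⟨u₀, hu₀, hu₀u.trans (hriT hus)⟩, fun v hv => ?_⟩
      exact (huT v ((hriT hus).trans hv)).trans (hriT hus)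
    -- s' ∈ equil r T
    have hrss' : r s s' := hrj _ _ hss'
    have hs'Eq : s' ∈ equil r T := by
      obtain ⟨hsΩ', hsT'⟩ := hsEq
      refine ⟨⟨hsΩ'.choose, hsΩ'.choose_spec.1, hsΩ'.choose_spec.2.trans (.single hrss')⟩,
        fun v hv => ?_⟩
      exact (hsT' v (.head hrss' hv)).trans (.single hrss')
    -- by hypothesis, s' is an ri-equilibrium
    have := h T hs'Eq
    exact ⟨⟨s', hs'Eq, .refl⟩, this.2⟩
end

section
/- Characterization of the M-relation via equilibria: X_i ⤳ X_j holds if and only if for every set of states S', Ψ_{X_i ∪ X_j}(S') = Ψ_{X_i}(Ψ_{X_i ∪ X_j}(S')). -/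
variable {S : Type*} {A : Type*}

/-- In a finite state space, from every state one can reach a "terminal" state. -/
lemma exists_terminal (r : S → S → Prop) [Finite S] (s : S) :
    ∃ w, Relation.ReflTransGen r s w ∧
      ∀ t, Relation.ReflTransGen r w t → Relation.ReflTransGen r t w := by
  let q : S → S → Prop := fun a b =>
    Relation.ReflTransGen r b a ∧ ¬ Relation.ReflTransGen r a b
  haveI : IsTrans S q := ⟨by
    rintro a b c ⟨h1, h2⟩ ⟨h3, h4⟩
    exact ⟨h3.trans h1, fun h => h2 (h.trans h3)⟩⟩
  haveI : IsIrrefl S q := ⟨by rintro a ⟨h1, h2⟩; exact h2 h1⟩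
  have hwf := Finite.wellFounded_of_trans_of_irrefl q
  obtain ⟨w, hw, hmin⟩ := hwf.has_min {t | Relation.ReflTransGen r s t}
    ⟨s, Relation.ReflTransGen.refl⟩
  refine ⟨w, hw, fun t hwt => ?_⟩
  by_contra htw
  exact hmin t (hw.trans hwt) ⟨hwt, htw⟩

/-- `equil r T` is closed under `r`-reachability. -/
lemma equil_closed {r : S → S → Prop} {T : Set S} {s s' : S}
    (hs : s ∈ equil r T) (h : Relation.ReflTransGen r s s') : s' ∈ equil r T := by
  obtain ⟨⟨e, heT, hes⟩, hterm⟩ := hs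
  exact ⟨⟨e, heT, hes.trans h⟩, fun t ht => (hterm t (h.trans ht)).trans h⟩

theorem mrel_iff_equil (rel : A → S → S → Prop) [Finite S] (Xi Xj : Set A) :
    mrelI rel Xi Xj ↔
      ∀ T : Set S, equil (relOf rel (Xi ∪ Xj)) T =
        equil (relOf rel Xi) (equil (relOf rel (Xi ∪ Xj)) T) := by
  set R := relOf rel (Xi ∪ Xj) with hR
  set Ri := relOf rel Xi with hRi
  have hiR : ∀ {s t : S}, Ri s t → R s t := by
    rintro s t ⟨a, ha, h⟩; exact ⟨a, Or.inl ha, h⟩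
  have hiR' : ∀ {s t : S}, Relation.ReflTransGen Ri s t → Relation.ReflTransGen R s t :=
    fun h => Relation.ReflTransGen.mono (fun _ _ => hiR) _ _ h
  -- equil Ri (equil R T) ⊆ equil R T, always
  have hsub : ∀ T : Set S, equil Ri (equil R T) ⊆ equil R T := by
    rintro T s ⟨⟨e, heE, hes⟩, _⟩
    exact equil_closed heE (hiR' hes)
  constructor
  · intro hm T
    ext s
    constructor
    · intro hs
      -- Q := equil Ri (equil R T) is closed under R
      set Q := equil Ri (equil R T) with hQdef
      have hQ : ∀ u ∈ Q, ∀ v, R u v → v ∈ Q := by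
        rintro u hu v ⟨a, ha | ha, hr⟩
        · obtain ⟨⟨e, heE, heu⟩, huterm⟩ := hu
          have huv : Relation.ReflTransGen Ri u v :=
            Relation.ReflTransGen.single ⟨a, ha, hr⟩
          exact ⟨⟨e, heE, heu.trans huv⟩, fun t ht => (huterm t (huv.trans ht)).trans huv⟩
        · exact hm T u hu v ⟨a, ha, hr⟩
      have hQ' : ∀ u ∈ Q, ∀ v, Relation.ReflTransGen R u v → v ∈ Q := by
        intro u hu v h
        induction h with
        | refl => exact hu
        | tail _ hstep ih => exact hQ _ ih _ hstep
      -- find a terminal state reachable from s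
      obtain ⟨w, hsw, hwterm⟩ := exists_terminal Ri s
      have hwE : w ∈ equil R T := equil_closed hs (hiR' hsw)
      have hwQ : w ∈ Q := ⟨⟨w, hwE, Relation.ReflTransGen.refl⟩, hwterm⟩
      have hws : Relation.ReflTransGen R w s := hs.2 w (hiR' hsw)
      exact hQ' w hwQ s hws
    · intro hs
      exact hsub T hs
  · intro h T s hs s' hss'
    rw [← h T] at hs ⊢
    have : R s s' := by rcases hss' with ⟨a, ha, hr⟩; exact ⟨a, Or.inr ha, hr⟩
    exact equil_closed hs (Relation.ReflTransGen.single this)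
end

section
/- Folding preserves modular organisations: if (X_1, …, X_m) is a modular organisation (i.e., for every i, (X_1 ∪ … ∪ X_{i-1}) ⤳ X_i), then for any 1 ≤ i ≤ j ≤ m the ordered partition (X_1, …, X_{i-1}, X_i ∪ … ∪ X_j, X_{j+1}, …, X_m) is also a modular organisation. The key step is: if X ⤳ X_i and (X ∪ X_i) ⤳ X_{i+1}, then X ⤳ (X_i ∪ X_{i+1}). -/
variable {S : Type*} {A : Type*}

/-- The M-relation `X_i ⤳ X_j`, characterized via equilibria:
`Ψ_{X_i ∪ X_j} = Ψ_{X_i} ∘ Ψ_{X_i ∪ X_j}`. -/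
def mrelE (rel : A → S → S → Prop) (Xi Xj : Set A) : Prop :=
  ∀ T : Set S, equil (relOf rel (Xi ∪ Xj)) T =
    equil (relOf rel Xi) (equil (relOf rel (Xi ∪ Xj)) T)

/-- Key step: if `W ⤳ Z` and `(W ∪ Z) ⤳ P` then `W ⤳ (Z ∪ P)`. -/
lemma mrelE_step (rel : A → S → S → Prop) (W Z P : Set A)
    (H1 : mrelE rel W Z) (H2 : mrelE rel (W ∪ Z) P) : mrelE rel W (Z ∪ P) := by
  intro T
  rw [← Set.union_assoc]
  have h2 := H2 T
  calc equil (relOf rel ((W ∪ Z) ∪ P)) T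
      = equil (relOf rel (W ∪ Z)) (equil (relOf rel ((W ∪ Z) ∪ P)) T) := h2
    _ = equil (relOf rel W)
        (equil (relOf rel (W ∪ Z)) (equil (relOf rel ((W ∪ Z) ∪ P)) T)) := H1 _
    _ = equil (relOf rel W) (equil (relOf rel ((W ∪ Z) ∪ P)) T) := by rw [← h2]

lemma fold_mrel (rel : A → S → S → Prop) (X : ℕ → Set A) (i j : ℕ) (hij : i ≤ j)
    (h : ∀ k, i ≤ k → k ≤ j → mrelE rel (⋃ l ∈ Set.Iio k, X l) (X k)) :
    mrelE rel (⋃ l ∈ Set.Iio i, X l) (⋃ l ∈ Set.Icc i j, X l) := by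
  induction j, hij using Nat.le_induction with
  | base =>
      have h1 := h i le_rfl le_rfl
      have : (⋃ l ∈ Set.Icc i i, X l) = X i := by simp
      rwa [this]
  | succ n hn IH =>
      have IH' := IH (fun k hk1 hk2 => h k hk1 (by omega))
      have h2 := h (n + 1) (by omega) le_rfl
      have hU1 : (⋃ l ∈ Set.Iio (n + 1), X l)
          = (⋃ l ∈ Set.Iio i, X l) ∪ ⋃ l ∈ Set.Icc i n, X l := by
        ext s
        simp only [Set.mem_iUnion, Set.mem_Iio, Set.mem_union, Set.mem_Icc, exists_prop]
        constructor
        · rintro ⟨l, hl, hs⟩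
          rcases lt_or_ge l i with h' | h'
          · exact Or.inl ⟨l, h', hs⟩
          · exact Or.inr ⟨l, ⟨h', by omega⟩, hs⟩
        · rintro (⟨l, hl, hs⟩ | ⟨l, ⟨hl1, hl2⟩, hs⟩)
          · exact ⟨l, by omega, hs⟩
          · exact ⟨l, by omega, hs⟩
      have hU2 : (⋃ l ∈ Set.Icc i (n + 1), X l)
          = (⋃ l ∈ Set.Icc i n, X l) ∪ X (n + 1) := by
        ext s
        simp only [Set.mem_iUnion, Set.mem_Icc, Set.mem_union, exists_prop]
        constructor
        · rintro ⟨l, ⟨hl1, hl2⟩, hs⟩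
          rcases Nat.lt_or_ge l (n + 1) with h' | h'
          · exact Or.inl ⟨l, ⟨hl1, by omega⟩, hs⟩
          · have : l = n + 1 := by omega
            exact Or.inr (this ▸ hs)
        · rintro (⟨l, ⟨hl1, hl2⟩, hs⟩ | hs)
          · exact ⟨l, ⟨hl1, by omega⟩, hs⟩
          · exact ⟨n + 1, ⟨by omega, le_rfl⟩, hs⟩
      rw [hU2]
      rw [hU1] at h2
      exact mrelE_step rel _ _ _ IH' h2

theorem folding_preserves_modular_organisation
    (rel : A → S → S → Prop) [Finite S] (m : ℕ) (X : ℕ → Set A)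
    (hdisj : ∀ k l, k < m → l < m → k ≠ l → Disjoint (X k) (X l))
    (hcover : (⋃ k ∈ Set.Iio m, X k) = Set.univ)
    (hmod : ∀ k < m, mrelE rel (⋃ l ∈ Set.Iio k, X l) (X k))
    (i j : ℕ) (hij : i ≤ j) (hjm : j < m)
    (Y : ℕ → Set A)
    (hY : ∀ k, Y k = if k < i then X k
      else if k = i then ⋃ l ∈ Set.Icc i j, X l
      else X (k + (j - i))) :
    ∀ k < m - (j - i), mrelE rel (⋃ l ∈ Set.Iio k, Y l) (Y k) := by
  intro k hk
  rcases lt_trichotomy k i with hki | hki | hki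
  · -- k < i : blocks before the fold are unchanged
    have hU : (⋃ l ∈ Set.Iio k, Y l) = ⋃ l ∈ Set.Iio k, X l := by
      apply Set.iUnion₂_congr
      intro l hl
      rw [hY l, if_pos (by simp at hl; omega)]
    rw [hU, hY k, if_pos hki]
    exact hmod k (by omega)
  · -- k = i : the folded block
    subst hki
    have hU : (⋃ l ∈ Set.Iio k, Y l) = ⋃ l ∈ Set.Iio k, X l := by
      apply Set.iUnion₂_congr
      intro l hl
      rw [hY l, if_pos (by simp at hl; omega)]
    rw [hU, hY k, if_neg (lt_irrefl k), if_pos rfl]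
    exact fold_mrel rel X k j hij (fun l hl1 hl2 => hmod l (by omega))
  · -- k > i : blocks after the fold are shifted
    have hU : (⋃ l ∈ Set.Iio k, Y l) = ⋃ l ∈ Set.Iio (k + (j - i)), X l := by
      ext s
      simp only [Set.mem_iUnion, Set.mem_Iio, exists_prop]
      constructor
      · rintro ⟨l, hl, hs⟩
        rw [hY l] at hs
        split_ifs at hs with h1 h2
        · exact ⟨l, by omega, hs⟩
        · simp only [Set.mem_iUnion, Set.mem_Icc, exists_prop] at hs
          obtain ⟨t, ⟨hti, htj⟩, hs⟩ := hs
          exact ⟨t, by omega, hs⟩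
        · exact ⟨l + (j - i), by omega, hs⟩
      · rintro ⟨t, ht, hs⟩
        by_cases h1 : t < i
        · exact ⟨t, by omega, by rw [hY t, if_pos h1]; exact hs⟩
        · by_cases h2 : t ≤ j
          · refine ⟨i, by omega, ?_⟩
            rw [hY i, if_neg (lt_irrefl i), if_pos rfl]
            simp only [Set.mem_iUnion, Set.mem_Icc, exists_prop]
            exact ⟨t, ⟨by omega, h2⟩, hs⟩
          · refine ⟨t - (j - i), by omega, ?_⟩
            rw [hY (t - (j - i)), if_neg (by omega), if_neg (by omega)]
            have : t - (j - i) + (j - i) = t := by omega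
            rw [this]
            exact hs
    rw [hU, hY k, if_neg (by omega), if_neg (by omega)]
    exact hmod (k + (j - i)) (by omega)
end

section
/- Key lemma for folding: if X ⤳ Y and (X ∪ Y) ⤳ Z, then X ⤳ (Y ∪ Z), where X ⤳ Y is characterized by Ψ_{X∪Y} = Ψ_X ∘ Ψ_{X∪Y} (as functions on sets of states). -/
variable {S : Type*} {A : Type*}

theorem mrel_folding_key (rel : A → S → S → Prop) [Finite S] (X Y Z : Set A)
    (h1 : mrelE rel X Y) (h2 : mrelE rel (X ∪ Y) Z) :
    mrelE rel X (Y ∪ Z) := by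
  intro T
  rw [show X ∪ (Y ∪ Z) = (X ∪ Y) ∪ Z from (Set.union_assoc X Y Z).symm]
  calc equil (relOf rel ((X ∪ Y) ∪ Z)) T
      = equil (relOf rel (X ∪ Y)) (equil (relOf rel ((X ∪ Y) ∪ Z)) T) := h2 T
    _ = equil (relOf rel X)
        (equil (relOf rel (X ∪ Y)) (equil (relOf rel ((X ∪ Y) ∪ Z)) T)) := h1 _
    _ = equil (relOf rel X) (equil (relOf rel ((X ∪ Y) ∪ Z)) T) := by rw [← h2 T]
end

section
/- Modular computation of global equilibria: if (X_1, …, X_m) is a modular organisation of A' = X_1 ∪ … ∪ X_m, then Ψ_{A'}(S') = (Ψ_{X_1} ⊘ ⋯ ⊘ Ψ_{X_m})(Ω_{A'}(S')) for every set of states S', where ⊘ is composed left-associatively on quotient classes as in the two-module composition lemma. -/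
variable {S : Type*} {A : Type*}

/-- Mutual reachability: `s ⇌ s'` iff each reaches the other. -/
def mutualReach {S : Type*} (r : S → S → Prop) (s s' : S) : Prop :=
  Relation.ReflTransGen r s s' ∧ Relation.ReflTransGen r s' s

/-- The `⇌`-class of a state. -/
def cls {S : Type*} (r : S → S → Prop) (s : S) : Set S := {t | mutualReach r s t}

/-- The `⇌_X`-classes of the states of a set `E`. -/
def classesOf {S : Type*} (r : S → S → Prop) (E : Set S) : Set (Set S) :=
  {C | ∃ s ∈ E, C = cls r s}

/-- The relation induced by `rY` on `⇌`-classes of `rX`. -/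
def indRel {S : Type*} (rX rY : S → S → Prop) (C C' : Set S) : Prop :=
  C ∈ classesOf rX Set.univ ∧ C' ∈ classesOf rX Set.univ ∧ ∃ s ∈ C, ∃ s' ∈ C', rY s s'

/-- Induced equilibria classes: classes of `E` whose `[→_Y]`-orbit stays within the
classes of `E` and is mutually reachable. -/
def indEquil {S : Type*} (rX rY : S → S → Prop) (E : Set S) : Set (Set S) :=
  {C ∈ classesOf rX E |
    (∀ C', Relation.ReflTransGen (indRel rX rY) C C' → C' ∈ classesOf rX E) ∧
    (∀ C' ∈ classesOf rX Set.univ, Relation.ReflTransGen (indRel rX rY) C C' →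
      Relation.ReflTransGen (indRel rX rY) C' C)}

/-- The composition operator `⊘`: `(Ψ_X ⊘ Ψ_Y)(T)` is the union (`Flatten`) of the
induced equilibria classes of `[→_Y]_{⇌_X}` among the classes of `Ψ_X(T)`. -/
def oslash {S : Type*} (rX rY : S → S → Prop) (T : Set S) : Set S :=
  ⋃₀ indEquil rX rY (equil rX T)

/-- Left-associated composition `Ψ_{X_0} ⊘ ⋯ ⊘ Ψ_{X_k}` on sets of states:
`G_0 = Ψ_{X_0}` and `G_{k+1} = Flatten ∘ [Ψ̃_{X_{k+1}}]_{⇌_{⋃_{i≤k} X_i}} ∘ G_k`. -/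
def compSeq (rel : A → S → S → Prop) (X : ℕ → Set A) : ℕ → Set S → Set S
  | 0, T => equil (relOf rel (X 0)) T
  | k + 1, T =>
      ⋃₀ indEquil (relOf rel (⋃ i ∈ Set.Iic k, X i)) (relOf rel (X (k + 1)))
        (compSeq rel X k T)

section Helpers

variable {S : Type*} {A : Type*}

lemma subset_orbit (r : S → S → Prop) (T : Set S) : T ⊆ orbit r T :=
  fun s hs => ⟨s, hs, .refl⟩

lemma orbit_closed {r : S → S → Prop} {T : Set S} {s t : S}
    (hs : s ∈ orbit r T) (h : Relation.ReflTransGen r s t) : t ∈ orbit r T := by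
  obtain ⟨u, hu, hus⟩ := hs
  exact ⟨u, hu, hus.trans h⟩

lemma orbit_orbit (r : S → S → Prop) (T : Set S) : orbit r (orbit r T) = orbit r T := by
  apply subset_antisymm
  · rintro s ⟨u, hu, hus⟩; exact orbit_closed hu hus
  · exact subset_orbit r _

lemma equil_orbit (r : S → S → Prop) (T : Set S) : equil r (orbit r T) = equil r T := by
  unfold equil; rw [orbit_orbit]

lemma orbit_eq_of_le {r r' : S → S → Prop} (h : ∀ s t, r s t → r' s t) (T : Set S) :
    orbit r (orbit r' T) = orbit r' T := by
  apply subset_antisymm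
  · rintro s ⟨u, hu, hus⟩; exact orbit_closed hu (Relation.ReflTransGen.mono h _ _ hus)
  · exact subset_orbit _ _

lemma mem_cls_self (r : S → S → Prop) (s : S) : s ∈ cls r s := ⟨.refl, .refl⟩

lemma cls_eq_of_mem {r : S → S → Prop} {s t : S} (h : t ∈ cls r s) :
    cls r t = cls r s := by
  ext u
  exact ⟨fun hu => ⟨h.1.trans hu.1, hu.2.trans h.2⟩,
    fun hu => ⟨h.2.trans hu.1, hu.2.trans h.1⟩⟩

lemma equil_mem_of_reach {r : S → S → Prop} {T : Set S} {s t : S}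
    (hs : s ∈ equil r T) (h : Relation.ReflTransGen r s t) : t ∈ equil r T :=
  ⟨orbit_closed hs.1 h, fun w hw => (hs.2 w (h.trans hw)).trans h⟩

lemma class_mem_equil {r : S → S → Prop} {T : Set S} {s t : S}
    (hs : s ∈ equil r T) (ht : t ∈ cls r s) : t ∈ equil r T :=
  equil_mem_of_reach hs ht.1

lemma relOf_union (rel : A → S → S → Prop) (A₁ A₂ : Set A) :
    relOf rel (A₁ ∪ A₂) = fun s t => relOf rel A₁ s t ∨ relOf rel A₂ s t := by
  funext s t
  rw [eq_iff_iff]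
  constructor
  · rintro ⟨a, ha | ha, hr⟩
    · exact Or.inl ⟨a, ha, hr⟩
    · exact Or.inr ⟨a, ha, hr⟩
  · rintro (⟨a, ha, hr⟩ | ⟨a, ha, hr⟩)
    · exact ⟨a, Or.inl ha, hr⟩
    · exact ⟨a, Or.inr ha, hr⟩

section TwoModule

variable {rX rY : S → S → Prop} {T : Set S}

local notation "rXY" => (fun s t => rX s t ∨ rY s t)

/-- Lemma B: lift an XY-path starting at an XY-equilibrium to a path of classes. -/
lemma lift_to_classes
    (hmrel : ∀ T' : Set S, equil rXY T' = equil rX (equil rXY T'))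
    {u v : S} (hu : u ∈ equil rXY T) (h : Relation.ReflTransGen rXY u v) :
    Relation.ReflTransGen (indRel rX rY) (cls rX u) (cls rX v) := by
  induction h with
  | refl => exact .refl
  | @tail b c hab step ih =>
      have hb : b ∈ equil rXY T := equil_mem_of_reach hu hab
      have hb' : b ∈ equil rX (equil rXY T) := by rw [← hmrel T]; exact hb
      rcases step with hx | hy
      · have : c ∈ cls rX b := ⟨.single hx, hb'.2 c (.single hx)⟩
        rwa [← cls_eq_of_mem this] at ih
      · exact ih.tail ⟨⟨b, trivial, rfl⟩, ⟨c, trivial, rfl⟩,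
          b, mem_cls_self rX b, c, mem_cls_self rX c, hy⟩

/-- Lemma C: turn a path of classes into a state path. -/
lemma path_of_classes {C₁ C₂ : Set S}
    (h : Relation.ReflTransGen (indRel rX rY) C₁ C₂)
    (v : S) (hC₁ : C₁ = cls rX v) :
    ∀ u₁ ∈ C₁, ∀ u₂ ∈ C₂, Relation.ReflTransGen rXY u₁ u₂ := by
  induction h with
  | refl =>
      intro u₁ h₁ u₂ h₂
      subst hC₁
      exact Relation.ReflTransGen.mono (fun _ _ => Or.inl) _ _ (h₁.2.trans h₂.1)
  | @tail C C₂' hab step ih =>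
      intro u₁ h₁ u₂ h₂
      obtain ⟨⟨w, -, hCw⟩, ⟨w₂, -, hC₂w⟩, t, htC, t', ht'C₂, hYtt'⟩ := step
      have h1 : Relation.ReflTransGen rXY u₁ t := ih u₁ h₁ t htC
      have h2 : Relation.ReflTransGen rXY t' u₂ := by
        rw [hC₂w] at ht'C₂ h₂
        exact Relation.ReflTransGen.mono (fun _ _ => Or.inl) _ _ (ht'C₂.2.trans h₂.1)
      exact (h1.tail (Or.inr hYtt')).trans h2

/-- Invariant for the forward direction. -/
lemma reach_invariant
    (hT : orbit rXY T = T)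
    (hmrel : ∀ T' : Set S, equil rXY T' = equil rX (equil rXY T'))
    {s : S} (hs : s ∈ equil rXY T) :
    ∀ C', Relation.ReflTransGen (indRel rX rY) (cls rX s) C' →
      ∃ u, u ∈ equil rXY T ∧ Relation.ReflTransGen rXY s u ∧ C' = cls rX u := by
  intro C' h
  induction h with
  | refl => exact ⟨s, hs, .refl, rfl⟩
  | @tail C C₂ hab step ih =>
      obtain ⟨u, huE, hsu, rfl⟩ := ih
      obtain ⟨-, ⟨w₂, -, hC₂w⟩, t, htC, t', ht'C₂, hYtt'⟩ := step
      have hut' : Relation.ReflTransGen rXY u t' :=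
        (Relation.ReflTransGen.mono (fun _ _ => Or.inl) _ _ htC.1).tail (Or.inr hYtt')
      refine ⟨t', equil_mem_of_reach huE hut', hsu.trans hut', ?_⟩
      rw [hC₂w] at ht'C₂ ⊢
      exact (cls_eq_of_mem ht'C₂).symm

/-- Every equilibrium of the joint system is an equilibrium of the X-system. -/
lemma equil_union_subset
    (hT : orbit rXY T = T)
    (hmrel : ∀ T' : Set S, equil rXY T' = equil rX (equil rXY T')) :
    equil rXY T ⊆ equil rX T := by
  intro s hs
  have hs' : s ∈ equil rX (equil rXY T) := by rw [← hmrel T]; exact hs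
  have hsT : s ∈ T := by rw [← hT]; exact hs.1
  exact ⟨subset_orbit rX T hsT, hs'.2⟩

/-- The two-module composition lemma. -/
lemma two_module
    (hT : orbit rXY T = T)
    (hmrel : ∀ T' : Set S, equil rXY T' = equil rX (equil rXY T')) :
    equil rXY T = ⋃₀ indEquil rX rY (equil rX T) := by
  apply subset_antisymm
  · -- forward
    intro s hs
    have hsE : s ∈ equil rX T := equil_union_subset hT hmrel hs
    refine ⟨cls rX s, ⟨⟨s, hsE, rfl⟩, ?_, ?_⟩, mem_cls_self rX s⟩
    · intro C' hC'
      obtain ⟨u, huE, -, rfl⟩ := reach_invariant hT hmrel hs C' hC'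
      exact ⟨u, equil_union_subset hT hmrel huE, rfl⟩
    · intro C' _ hC'
      obtain ⟨u, huE, hsu, rfl⟩ := reach_invariant hT hmrel hs C' hC'
      have : Relation.ReflTransGen rXY u s := hs.2 u hsu
      exact lift_to_classes hmrel huE this
  · -- backward
    rintro s ⟨C, ⟨⟨s₀, hs₀E, rfl⟩, hi, hii⟩, hsC⟩
    have hsE : s ∈ equil rX T := class_mem_equil hs₀E hsC
    have hCs : cls rX s = cls rX s₀ := cls_eq_of_mem hsC
    refine ⟨?_, ?_⟩
    · -- s ∈ orbit rXY T
      obtain ⟨u, hu, hus⟩ := hsE.1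
      exact ⟨u, hu, Relation.ReflTransGen.mono (fun _ _ => Or.inl) _ _ hus⟩
    · intro w hw
      -- invariant along the path
      have inv : ∀ w, Relation.ReflTransGen rXY s w →
          w ∈ equil rX T ∧ Relation.ReflTransGen (indRel rX rY) (cls rX s₀) (cls rX w) := by
        intro w hw
        induction hw with
        | refl => exact ⟨hsE, by rw [hCs]⟩
        | @tail b c hab step ih =>
            obtain ⟨hbE, hCb⟩ := ih
            rcases step with hx | hy
            · have hc : c ∈ cls rX b := ⟨.single hx, hbE.2 c (.single hx)⟩
              rw [cls_eq_of_mem hc]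
              exact ⟨class_mem_equil hbE hc, hCb⟩
            · have edge : indRel rX rY (cls rX b) (cls rX c) :=
                ⟨⟨b, trivial, rfl⟩, ⟨c, trivial, rfl⟩,
                  b, mem_cls_self rX b, c, mem_cls_self rX c, hy⟩
              have hCc := hCb.tail edge
              obtain ⟨v, hvE, hveq⟩ := hi (cls rX c) hCc
              have : c ∈ cls rX v := by rw [← hveq]; exact mem_cls_self rX c
              exact ⟨class_mem_equil hvE this, hCc⟩
      obtain ⟨hwE, hCw⟩ := inv w hw
      have back : Relation.ReflTransGen (indRel rX rY) (cls rX w) (cls rX s₀) :=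
        hii (cls rX w) ⟨w, trivial, rfl⟩ hCw
      exact path_of_classes back w rfl w (mem_cls_self rX w) s hsC

end TwoModule

lemma iUnion_Iic_zero (X : ℕ → Set A) : (⋃ i ∈ Set.Iic 0, X i) = X 0 := by
  ext a; simp [Nat.le_zero]

lemma iUnion_Iic_succ (X : ℕ → Set A) (m : ℕ) :
    (⋃ i ∈ Set.Iic (m + 1), X i) = (⋃ i ∈ Set.Iic m, X i) ∪ X (m + 1) := by
  ext a
  simp only [Set.mem_iUnion, Set.mem_Iic, Set.mem_union, exists_prop]
  constructor
  · rintro ⟨i, hi, ha⟩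
    rcases Nat.le_succ_iff.mp hi with h | h
    · exact Or.inl ⟨i, h, ha⟩
    · subst h; exact Or.inr ha
  · rintro (⟨i, hi, ha⟩ | ha)
    · exact ⟨i, hi.trans (Nat.le_succ m), ha⟩
    · exact ⟨m + 1, le_rfl, ha⟩

lemma iUnion_Iio_succ (X : ℕ → Set A) (m : ℕ) :
    (⋃ i ∈ Set.Iio (m + 1), X i) = ⋃ i ∈ Set.Iic m, X i := by
  ext a
  simp [Nat.lt_succ_iff]

end Helpers

lemma main_aux {S : Type*} {A : Type*} (rel : A → S → S → Prop) (X : ℕ → Set A) :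
    ∀ m : ℕ, (∀ i ≤ m, mrelE rel (⋃ j ∈ Set.Iio i, X j) (X i)) → ∀ T : Set S,
      equil (relOf rel (⋃ i ∈ Set.Iic m, X i)) T =
        compSeq rel X m (orbit (relOf rel (⋃ i ∈ Set.Iic m, X i)) T) := by
  intro m
  induction m with
  | zero =>
      intro _ T
      rw [iUnion_Iic_zero]
      show equil (relOf rel (X 0)) T = equil (relOf rel (X 0)) (orbit (relOf rel (X 0)) T)
      rw [equil_orbit]
  | succ m ih =>
      intro hmod T
      set rX := relOf rel (⋃ i ∈ Set.Iic m, X i) with hrXdef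
      set rY := relOf rel (X (m + 1)) with hrYdef
      have hrel : relOf rel (⋃ i ∈ Set.Iic (m + 1), X i)
          = fun s t => rX s t ∨ rY s t := by
        rw [iUnion_Iic_succ, relOf_union]
      have hmrel : ∀ T' : Set S,
          equil (fun s t => rX s t ∨ rY s t) T'
            = equil rX (equil (fun s t => rX s t ∨ rY s t) T') := by
        intro T'
        have h := hmod (m + 1) le_rfl T'
        rw [iUnion_Iio_succ, relOf_union] at h
        exact h
      rw [hrel]
      set T'' := orbit (fun s t => rX s t ∨ rY s t) T with hT''
      have horb : orbit rX T'' = T'' :=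
        orbit_eq_of_le (fun s t h => Or.inl h) T
      have hih : equil rX T'' = compSeq rel X m T'' := by
        have := ih (fun i hi => hmod i (hi.trans (Nat.le_succ m))) T''
        rwa [horb] at this
      calc equil (fun s t => rX s t ∨ rY s t) T
          = equil (fun s t => rX s t ∨ rY s t) T'' := (equil_orbit _ _).symm
        _ = ⋃₀ indEquil rX rY (equil rX T'') := two_module (orbit_orbit _ _) hmrel
        _ = ⋃₀ indEquil rX rY (compSeq rel X m T'') := by rw [hih]
        _ = compSeq rel X (m + 1) T'' := rfl

theorem modular_computation_of_global_equilibria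
    (rel : A → S → S → Prop) [Finite S] (m : ℕ) (X : ℕ → Set A)
    (hdisj : ∀ k l, k ≤ m → l ≤ m → k ≠ l → Disjoint (X k) (X l))
    (hmod : ∀ i ≤ m, mrelE rel (⋃ j ∈ Set.Iio i, X j) (X i)) (T : Set S) :
    equil (relOf rel (⋃ i ∈ Set.Iic m, X i)) T =
      compSeq rel X m (orbit (relOf rel (⋃ i ∈ Set.Iic m, X i)) T) := by
  exact main_aux rel X m hmod T
end
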